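/- arXiv:2303.09868 — 8 statements merged into one kernel-verified Lean document; each statement's English description precedes it below -/
import Mathlib

section
/- Let (Ω, 𝓕, P) be a probability space, 𝓗 a sub-σ-algebra of 𝓕, and X : Ω → ℝ an essentially bounded random variable. Then there exists an 𝓗-measurable essentially bounded random variable Y such that X ≤ Y P-a.s. and, for every 𝓗-measurable random variable Z with X ≤ Z P-a.s., one has Y ≤ Z P-a.s.; moreover Y is unique up to P-a.s. equality. -/
open MeasureTheory Filter

/-- A real random variable is essentially bounded w.r.t. the measure `P`. -/
def EssBdd {Ω : Type*} {F : MeasurableSpace Ω} (P : @Measure Ω F) (X : Ω → ℝ) : Prop :=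
  ∃ C : ℝ, ∀ᵐ ω ∂P, |X ω| ≤ C

/-- `Y` is the conditional essential supremum `M(X|H)` of `X` given the sub-σ-algebra `H`:
`Y` is `H`-measurable, essentially bounded, `X ≤ Y` a.s., and `Y` is a.s. below every
`H`-measurable `Z` with `X ≤ Z` a.s. -/
def IsCondEssSup {Ω : Type*} {F : MeasurableSpace Ω} (P : @Measure Ω F)
    (H : MeasurableSpace Ω) (X Y : Ω → ℝ) : Prop :=
  Measurable[H] Y ∧ EssBdd P Y ∧ (∀ᵐ ω ∂P, X ω ≤ Y ω) ∧
    ∀ Z : Ω → ℝ, Measurable[H] Z → (∀ᵐ ω ∂P, X ω ≤ Z ω) → ∀ᵐ ω ∂P, Y ω ≤ Z ω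

/-- `Y` is the conditional essential infimum `m(X|H) = -M(-X|H)`. -/
def IsCondEssInf {Ω : Type*} {F : MeasurableSpace Ω} (P : @Measure Ω F)
    (H : MeasurableSpace Ω) (X Y : Ω → ℝ) : Prop :=
  IsCondEssSup P H (fun ω => -X ω) (fun ω => -Y ω)

/-- A bounded `F`-measurable function is integrable w.r.t. a probability measure. -/
lemma integrable_of_bdd {Ω : Type*} [F : MeasurableSpace Ω]
    (P : Measure Ω) [IsProbabilityMeasure P] {C : ℝ} {Z : Ω → ℝ}
    (hZ : Measurable Z) (hb : ∀ ω, |Z ω| ≤ C) : Integrable Z P := by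
  refine (integrable_const C).mono' hZ.aestronglyMeasurable ?_
  exact Filter.Eventually.of_forall fun ω => by simpa [Real.norm_eq_abs] using hb ω

/-- Existence and a.s. uniqueness of the conditional essential supremum of an essentially
bounded random variable. -/
theorem condEssSup_exists_unique {Ω : Type*} [F : MeasurableSpace Ω]
    (P : Measure Ω) [IsProbabilityMeasure P] (H : MeasurableSpace Ω) (hH : H ≤ F)
    (X : Ω → ℝ) (hX : EssBdd P X) :
    (∃ Y : Ω → ℝ, IsCondEssSup P H X Y) ∧
      ∀ Y Y' : Ω → ℝ, IsCondEssSup P H X Y → IsCondEssSup P H X Y' → Y =ᵐ[P] Y' := by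
  constructor
  · -- existence
    obtain ⟨C₀, hC₀⟩ := hX
    set C : ℝ := max C₀ 0 with hCdef
    have hC : ∀ᵐ ω ∂P, |X ω| ≤ C := hC₀.mono fun ω h => h.trans (le_max_left _ _)
    have hC0 : (0:ℝ) ≤ C := le_max_right _ _
    -- the admissible set
    set S : Set (Ω → ℝ) :=
      {Z | Measurable[H] Z ∧ (∀ ω, |Z ω| ≤ C) ∧ ∀ᵐ ω ∂P, X ω ≤ Z ω} with hSdef
    have hconstS : (fun _ : Ω => C) ∈ S := by
      refine ⟨measurable_const, fun ω => by simp [abs_of_nonneg hC0], ?_⟩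
      exact hC.mono fun ω h => (abs_le.1 h).2
    -- integrability of members of S
    have hint : ∀ Z ∈ S, Integrable Z P := by
      intro Z hZ
      obtain ⟨h1, h2, h3⟩ := hZ
      have h1' : Measurable[F] Z := h1.mono hH le_rfl
      exact integrable_of_bdd (F := F) P h1' h2
    -- the set of integrals
    set T : Set ℝ := (fun Z : Ω → ℝ => ∫ ω, Z ω ∂P) '' S with hTdef
    have hTne : T.Nonempty := ⟨_, ⟨_, hconstS, rfl⟩⟩
    set m : ℝ := sInf T with hmdef
    -- choose a minimizing sequence
    have hseq : ∀ n : ℕ, ∃ Z ∈ S, ∫ ω, Z ω ∂P < m + 1 / (n + 1) := by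
      intro n
      have hpos : (0:ℝ) < 1 / (n + 1) := by positivity
      obtain ⟨a, haT, ha⟩ := Real.lt_sInf_add_pos hTne hpos
      obtain ⟨Z, hZS, rfl⟩ := haT
      exact ⟨Z, hZS, ha⟩
    choose Z hZS hZint using hseq
    set Y : Ω → ℝ := fun ω => ⨅ n, Z n ω with hYdef
    have hbdd : ∀ ω, BddBelow (Set.range fun n => Z n ω) := by
      intro ω
      exact ⟨-C, by rintro x ⟨n, rfl⟩; exact neg_le_of_abs_le ((hZS n).2.1 ω)⟩
    have hYle : ∀ n ω, Y ω ≤ Z n ω := fun n ω => ciInf_le (hbdd ω) n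
    have hYabs : ∀ ω, |Y ω| ≤ C := by
      intro ω
      rw [abs_le]
      constructor
      · exact le_ciInf fun n => neg_le_of_abs_le ((hZS n).2.1 ω)
      · exact (hYle 0 ω).trans (abs_le.1 ((hZS 0).2.1 ω)).2
    have hYmeas : Measurable[H] Y := Measurable.iInf fun n => (hZS n).1
    have hXY : ∀ᵐ ω ∂P, X ω ≤ Y ω := by
      have := ae_all_iff.2 fun n => (hZS n).2.2
      exact this.mono fun ω h => le_ciInf fun n => h n
    have hYS : Y ∈ S := ⟨hYmeas, hYabs, hXY⟩
    have hYint : Integrable Y P := hint Y hYS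
    -- the integral of Y equals m
    have hmY : m ≤ ∫ ω, Y ω ∂P := by
      refine csInf_le ?_ ⟨Y, hYS, rfl⟩
      refine ⟨-C, ?_⟩
      rintro x ⟨W, hWS, rfl⟩
      calc -C = ∫ _ : Ω, (-C) ∂P := by simp
        _ ≤ ∫ ω, W ω ∂P := by
            refine integral_mono (integrable_const _) (hint W hWS) fun ω => ?_
            exact neg_le_of_abs_le (hWS.2.1 ω)
    have hYm : ∫ ω, Y ω ∂P ≤ m := by
      refine le_of_forall_pos_le_add fun ε hε => ?_
      obtain ⟨n, hn⟩ := exists_nat_one_div_lt hε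
      have h1 : ∫ ω, Y ω ∂P ≤ ∫ ω, Z n ω ∂P :=
        integral_mono hYint (hint _ (hZS n)) fun ω => hYle n ω
      have : (1:ℝ) / (n + 1) ≤ ε := le_of_lt (by exact_mod_cast hn)
      linarith [hZint n]
    have hYeq : ∫ ω, Y ω ∂P = m := le_antisymm hYm hmY
    -- minimality against members of S
    have hminS : ∀ Z' ∈ S, ∀ᵐ ω ∂P, Y ω ≤ Z' ω := by
      intro Z' hZ'
      set W : Ω → ℝ := fun ω => min (Y ω) (Z' ω) with hWdef
      have hWS : W ∈ S := by
        refine ⟨hYmeas.min hZ'.1, fun ω => abs_le.2 ⟨?_, ?_⟩, ?_⟩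
        · exact le_min (neg_le_of_abs_le (hYabs ω)) (neg_le_of_abs_le (hZ'.2.1 ω))
        · exact (min_le_left _ _).trans (abs_le.1 (hYabs ω)).2
        · filter_upwards [hXY, hZ'.2.2] with ω h1 h2
          exact le_min h1 h2
      have hWY : ∀ ω, W ω ≤ Y ω := fun ω => min_le_left _ _
      have hmW : m ≤ ∫ ω, W ω ∂P := by
        refine csInf_le ?_ ⟨W, hWS, rfl⟩
        refine ⟨-C, ?_⟩
        rintro x ⟨V, hVS, rfl⟩
        calc -C = ∫ _ : Ω, (-C) ∂P := by simp
          _ ≤ ∫ ω, V ω ∂P := by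
              refine integral_mono (integrable_const _) (hint V hVS) fun ω => ?_
              exact neg_le_of_abs_le (hVS.2.1 ω)
      have hWint : Integrable W P := hint W hWS
      have hdiff : ∫ ω, (Y ω - W ω) ∂P = 0 := by
        rw [integral_sub hYint hWint]
        have h1 : ∫ ω, W ω ∂P ≤ ∫ ω, Y ω ∂P := integral_mono hWint hYint hWY
        linarith
      have hzero : (fun ω => Y ω - W ω) =ᵐ[P] 0 := by
        rw [← integral_eq_zero_iff_of_nonneg (fun ω => sub_nonneg.2 (hWY ω))
          (hYint.sub hWint)]
        exact hdiff
      filter_upwards [hzero] with ω h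
      have : Y ω = W ω := by simpa [sub_eq_zero] using h
      rw [this]
      exact min_le_right _ _
    refine ⟨Y, hYmeas, ⟨C, Filter.Eventually.of_forall hYabs⟩, hXY, ?_⟩
    -- minimality against arbitrary H-measurable Z
    intro Zg hZgm hZgX
    set Z' : Ω → ℝ := fun ω => max (min (Zg ω) C) (-C) with hZ'def
    have hZ'S : Z' ∈ S := by
      refine ⟨(hZgm.min measurable_const).max measurable_const,
        fun ω => abs_le.2 ⟨le_max_right _ _, max_le ((min_le_right _ _)) (by linarith)⟩, ?_⟩
      filter_upwards [hZgX, hC] with ω h1 h2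
      exact le_max_of_le_left (le_min h1 (abs_le.1 h2).2)
    filter_upwards [hminS Z' hZ'S, hZgX, hC] with ω h1 h2 h3
    refine h1.trans (max_le (min_le_left _ _) ?_)
    exact le_trans (neg_le_of_abs_le h3) h2
  · -- uniqueness
    rintro Y Y' ⟨hYm, _, hXY, hYmin⟩ ⟨hY'm, _, hXY', hY'min⟩
    have h1 := hYmin Y' hY'm hXY'
    have h2 := hY'min Y hYm hXY
    filter_upwards [h1, h2] with ω ha hb
    exact le_antisymm ha hb
end

section
/- Let X, Y be essentially bounded random variables. Then |M(X|𝓗) − M(Y|𝓗)| ≤ M(|X−Y| |𝓗) P-a.s. and |m(X|𝓗) − m(Y|𝓗)| ≤ M(|X−Y| |𝓗) P-a.s. In particular |M(X|𝓗)| ≤ M(|X| |𝓗) P-a.s. -/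
open MeasureTheory Filter

private lemma sup_le_sup_add {Ω : Type*} [F : MeasurableSpace Ω]
    (P : Measure Ω) (H : MeasurableSpace Ω)
    (X Y MX MY MabsXY : Ω → ℝ)
    (hMX : IsCondEssSup P H X MX) (hMY : IsCondEssSup P H Y MY)
    (hMabsXY : IsCondEssSup P H (fun ω => |X ω - Y ω|) MabsXY) :
    ∀ᵐ ω ∂P, MX ω - MY ω ≤ MabsXY ω := by
  have h := hMX.2.2.2 (fun ω => MY ω + MabsXY ω) (hMY.1.add hMabsXY.1) ?_
  · filter_upwards [h] with ω hω; linarith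
  · filter_upwards [hMY.2.2.1, hMabsXY.2.2.1] with ω h1 h2
    have := abs_sub_abs_le_abs_sub (X ω) (Y ω)
    have h3 : X ω - Y ω ≤ |X ω - Y ω| := le_abs_self _
    linarith

/-- `|M(X|H) − M(Y|H)| ≤ M(|X−Y||H)`, `|m(X|H) − m(Y|H)| ≤ M(|X−Y||H)` and
`|M(X|H)| ≤ M(|X||H)` a.s. -/
theorem condEssSup_abs_sub {Ω : Type*} [F : MeasurableSpace Ω]
    (P : Measure Ω) [IsProbabilityMeasure P] (H : MeasurableSpace Ω) (hH : H ≤ F)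
    (X Y MX MY mX mY MabsXY MabsX : Ω → ℝ) (hX : EssBdd P X) (hY : EssBdd P Y)
    (hMX : IsCondEssSup P H X MX) (hMY : IsCondEssSup P H Y MY)
    (hmX : IsCondEssInf P H X mX) (hmY : IsCondEssInf P H Y mY)
    (hMabsXY : IsCondEssSup P H (fun ω => |X ω - Y ω|) MabsXY)
    (hMabsX : IsCondEssSup P H (fun ω => |X ω|) MabsX) :
    (∀ᵐ ω ∂P, |MX ω - MY ω| ≤ MabsXY ω) ∧
      (∀ᵐ ω ∂P, |mX ω - mY ω| ≤ MabsXY ω) ∧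
      (∀ᵐ ω ∂P, |MX ω| ≤ MabsX ω) := by
  have h1 := sup_le_sup_add (F := F) P H X Y MX MY MabsXY hMX hMY hMabsXY
  have habs : (fun ω => |Y ω - X ω|) = fun ω => |X ω - Y ω| := by
    funext ω; rw [abs_sub_comm]
  have h2 := sup_le_sup_add (F := F) P H Y X MY MX MabsXY hMY hMX (habs ▸ hMabsXY)
  have hneg : (fun ω => |(-X ω) - (-Y ω)|) = fun ω => |X ω - Y ω| := by
    funext ω; rw [neg_sub_neg, abs_sub_comm]
  have h3 := sup_le_sup_add (F := F) P H (fun ω => -X ω) (fun ω => -Y ω)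
    (fun ω => -mX ω) (fun ω => -mY ω) MabsXY hmX hmY (hneg ▸ hMabsXY)
  have h4 := sup_le_sup_add (F := F) P H (fun ω => -Y ω) (fun ω => -X ω)
    (fun ω => -mY ω) (fun ω => -mX ω) MabsXY hmY hmX (by
      rw [show (fun ω => |(-Y ω) - (-X ω)|) = fun ω => |X ω - Y ω| from by
        funext ω; rw [neg_sub_neg, abs_sub_comm]]; exact hMabsXY)
  have h5 : ∀ᵐ ω ∂P, MX ω ≤ MabsX ω := by
    apply hMX.2.2.2 _ hMabsX.1
    filter_upwards [hMabsX.2.2.1] with ω hω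
    exact (le_abs_self _).trans hω
  have h6 : ∀ᵐ ω ∂P, -MabsX ω ≤ MX ω := by
    filter_upwards [hMX.2.2.1, hMabsX.2.2.1] with ω ha hb
    have := neg_abs_le (X ω); linarith
  refine ⟨?_, ?_, ?_⟩
  · filter_upwards [h1, h2] with ω a b; rw [abs_sub_le_iff]; exact ⟨a, b⟩
  · filter_upwards [h3, h4] with ω a b
    rw [abs_sub_le_iff]; constructor <;> linarith [a, b]
  · filter_upwards [h5, h6] with ω a b; rw [abs_le]; exact ⟨by linarith, a⟩
end

section
/- Let 𝓖 ⊆ 𝓗 be sub-σ-algebras of 𝓕 and X an essentially bounded random variable. Then (1) M(X|𝓗) ≤ M(X|𝓖) P-a.s., and (2) M(M(X|𝓗)|𝓖) = M(M(X|𝓖)|𝓗) = M(X|𝓖) P-a.s. (tower property of the conditional essential supremum). -/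
open MeasureTheory Filter

/-- Tower property of the conditional essential supremum: for sub-σ-algebras `G ⊆ H`,
`M(X|H) ≤ M(X|G)` a.s. and `M(M(X|H)|G) = M(M(X|G)|H) = M(X|G)` a.s. -/
theorem condEssSup_tower {Ω : Type*} [F : MeasurableSpace Ω]
    (P : Measure Ω) [IsProbabilityMeasure P]
    (G H : MeasurableSpace Ω) (hGH : G ≤ H) (hH : H ≤ F)
    (X MH MG MHG MGH : Ω → ℝ) (hX : EssBdd P X)
    (hMH : IsCondEssSup P H X MH) (hMG : IsCondEssSup P G X MG)
    (hMHG : IsCondEssSup P G MH MHG) (hMGH : IsCondEssSup P H MG MGH) :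
    (∀ᵐ ω ∂P, MH ω ≤ MG ω) ∧ MHG =ᵐ[P] MG ∧ MGH =ᵐ[P] MG := by
  obtain ⟨hMHmeas, hMHbdd, hXMH, hMHmin⟩ := hMH
  obtain ⟨hMGmeas, hMGbdd, hXMG, hMGmin⟩ := hMG
  obtain ⟨hMHGmeas, hMHGbdd, hMHMHG, hMHGmin⟩ := hMHG
  obtain ⟨hMGHmeas, hMGHbdd, hMGMGH, hMGHmin⟩ := hMGH
  have hMGmeasH : Measurable[H] MG := hMGmeas.mono hGH le_rfl
  have h1 : ∀ᵐ ω ∂P, MH ω ≤ MG ω := hMHmin MG hMGmeasH hXMG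
  refine ⟨h1, ?_, ?_⟩
  · have le1 : ∀ᵐ ω ∂P, MHG ω ≤ MG ω := hMHGmin MG hMGmeas h1
    have le2 : ∀ᵐ ω ∂P, MG ω ≤ MHG ω :=
      hMGmin MHG hMHGmeas (hXMH.mp (hMHMHG.mono fun ω h1 h2 => h2.trans h1))
    filter_upwards [le1, le2] with ω a b using le_antisymm a b
  · have le1 : ∀ᵐ ω ∂P, MGH ω ≤ MG ω :=
      hMGHmin MG hMGmeasH (Filter.Eventually.of_forall fun ω => le_rfl)
    filter_upwards [le1, hMGMGH] with ω a b using le_antisymm a b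
end

section
/- Let X be an essentially bounded random variable and g an 𝓗-measurable essentially bounded random variable. Then M(g ∧ X|𝓗) = g ∧ M(X|𝓗) P-a.s. and m(g ∨ X|𝓗) = g ∨ m(X|𝓗) P-a.s., where ∨ and ∧ denote pointwise maximum and minimum. -/
open MeasureTheory Filter

lemma condEssSup_min_aux {Ω : Type*} [F : MeasurableSpace Ω]
    (P : Measure Ω) (H : MeasurableSpace Ω)
    (X g MX Mmin : Ω → ℝ) (hX : EssBdd P X) (hgm : Measurable[H] g)
    (hMX : IsCondEssSup P H X MX)
    (hMmin : IsCondEssSup P H (fun ω => min (g ω) (X ω)) Mmin) :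
    Mmin =ᵐ[P] fun ω => min (g ω) (MX ω) := by
  obtain ⟨hMXm, _, hXle, hMXmin⟩ := hMX
  obtain ⟨hMm, _, hminle, hMminmin⟩ := hMmin
  obtain ⟨C, hC⟩ := hX
  have h1 : ∀ᵐ ω ∂P, Mmin ω ≤ min (g ω) (MX ω) := by
    apply hMminmin _ (hgm.min hMXm)
    filter_upwards [hXle] with ω h
    exact min_le_min le_rfl h
  -- reverse direction
  set Z : Ω → ℝ := fun ω => if g ω ≤ Mmin ω then C else Mmin ω with hZdef
  have hZm : Measurable[H] Z := by
    exact Measurable.ite (measurableSet_le hgm hMm) measurable_const hMm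
  have hXZ : ∀ᵐ ω ∂P, X ω ≤ Z ω := by
    filter_upwards [hC, hminle] with ω hc hm
    by_cases h : g ω ≤ Mmin ω
    · simp only [hZdef, h, if_true]
      exact (le_abs_self _).trans hc
    · simp only [hZdef, h, if_false]
      push_neg at h
      have : min (g ω) (X ω) = X ω := by
        rcases min_cases (g ω) (X ω) with ⟨he, hle⟩ | ⟨he, _⟩
        · exact absurd (hm.trans_lt h) (by simp [he])
        · exact he
      linarith [this ▸ hm]
  have h2 : ∀ᵐ ω ∂P, MX ω ≤ Z ω := hMXmin Z hZm hXZ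
  filter_upwards [h1, h2, hminle] with ω h1ω h2ω hmω
  refine le_antisymm h1ω ?_
  by_cases h : g ω ≤ Mmin ω
  · exact (min_le_left _ _).trans h
  · simp only [hZdef, h, if_false] at h2ω
    exact (min_le_right _ _).trans h2ω

/-- For `H`-measurable `g`: `M(g ∧ X|H) = g ∧ M(X|H)` and `m(g ∨ X|H) = g ∨ m(X|H)` a.s. -/
theorem condEssSup_min_measurable {Ω : Type*} [F : MeasurableSpace Ω]
    (P : Measure Ω) [IsProbabilityMeasure P] (H : MeasurableSpace Ω) (hH : H ≤ F)
    (X g MX mX Mmin mmax : Ω → ℝ) (hX : EssBdd P X) (hg : EssBdd P g)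
    (hgm : Measurable[H] g)
    (hMX : IsCondEssSup P H X MX) (hmX : IsCondEssInf P H X mX)
    (hMmin : IsCondEssSup P H (fun ω => min (g ω) (X ω)) Mmin)
    (hmmax : IsCondEssInf P H (fun ω => max (g ω) (X ω)) mmax) :
    (Mmin =ᵐ[P] fun ω => min (g ω) (MX ω)) ∧
      (mmax =ᵐ[P] fun ω => max (g ω) (mX ω)) := by
  constructor
  · exact condEssSup_min_aux (F := F) P H X g MX Mmin hX hgm hMX hMmin
  · have hnX : EssBdd P (fun ω => -X ω) := by
      obtain ⟨C, hC⟩ := hX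
      exact ⟨C, by filter_upwards [hC] with ω h using by simpa [abs_neg] using h⟩
    have hmmax' : IsCondEssSup P H (fun ω => min (-g ω) (-X ω)) (fun ω => -mmax ω) := by
      have := hmmax
      unfold IsCondEssInf at this
      convert this using 2 with ω
      simp [neg_sup]
    have hgm' : Measurable[H] (fun ω => -g ω) := hgm.neg
    have := condEssSup_min_aux (F := F) P H (fun ω => -X ω) (fun ω => -g ω)
      (fun ω => -mX ω) (fun ω => -mmax ω) hnX hgm' hmX hmmax'
    filter_upwards [this] with ω h
    simp only [neg_eq_iff_eq_neg] at h
    rw [h]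
    simp [neg_inf]
end

section
/- Let X, Y be nonnegative essentially bounded random variables with X ∧ Y = 0 P-a.s. (pointwise minimum). Then m(X|𝓗) ∧ M(Y|𝓗) = 0 P-a.s. -/
/-!
On the `H`-measurable set `{m(X|H) > 0}` we have `X > 0`, hence `Y = 0` by disjointness.
Since `M(·|H)` is local on `H`-measurable sets (compare `Y` with the `H`-measurable majorant
equal to `0` on that set and to `M(Y|H)` off it), `M(Y|H) ≤ 0` there; with `m(X|H), M(Y|H) ≥ 0`
this forces the minimum to vanish almost everywhere.
-/

open MeasureTheory Filter

section CondEss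

variable {Ω : Type*} {F : MeasurableSpace Ω} {P : Measure Ω} {H : MeasurableSpace Ω}
  {X Y : Ω → ℝ}

theorem IsCondEssInf.measurable (h : IsCondEssInf P H X Y) : Measurable[H] Y := by
  simpa [Pi.neg_def] using h.1.neg

theorem IsCondEssInf.ae_le (h : IsCondEssInf P H X Y) : ∀ᵐ ω ∂P, Y ω ≤ X ω := by
  filter_upwards [h.2.2.1] with ω hω using neg_le_neg_iff.mp hω

theorem IsCondEssInf.ae_le_of_ae_le (h : IsCondEssInf P H X Y) {Z : Ω → ℝ}
    (hZ : Measurable[H] Z) (hZX : ∀ᵐ ω ∂P, Z ω ≤ X ω) : ∀ᵐ ω ∂P, Z ω ≤ Y ω := by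
  have := h.2.2.2 (fun ω => -Z ω) hZ.neg
    (by filter_upwards [hZX] with ω hω using neg_le_neg hω)
  filter_upwards [this] with ω hω using neg_le_neg_iff.mp hω

theorem IsCondEssSup.ae_le_on_of_ae_le_on (h : IsCondEssSup P H X Y) {A : Set Ω}
    (hA : MeasurableSet[H] A) {W : Ω → ℝ} (hW : Measurable[H] W)
    (hXW : ∀ᵐ ω ∂P, ω ∈ A → X ω ≤ W ω) : ∀ᵐ ω ∂P, ω ∈ A → Y ω ≤ W ω := by
  classical
  have hXZ : ∀ᵐ ω ∂P, X ω ≤ A.piecewise W Y ω := by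
    filter_upwards [hXW, h.2.2.1] with ω hXWω hXYω
    by_cases hω : ω ∈ A
    · simpa [hω] using hXWω hω
    · simpa [hω] using hXYω
  filter_upwards [h.2.2.2 _ (hW.piecewise hA h.1) hXZ] with ω hω hωA
  simpa [hωA] using hω

end CondEss

theorem condEssInf_min_condEssSup_of_disjoint_general {Ω : Type*} [F : MeasurableSpace Ω]
    (P : Measure Ω) (H : MeasurableSpace Ω)
    (X Y mX MY : Ω → ℝ)
    (hXpos : ∀ᵐ ω ∂P, 0 ≤ X ω) (hYpos : ∀ᵐ ω ∂P, 0 ≤ Y ω)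
    (hdisj : ∀ᵐ ω ∂P, min (X ω) (Y ω) = 0)
    (hmX : IsCondEssInf P H X mX) (hMY : IsCondEssSup P H Y MY) :
    ∀ᵐ ω ∂P, min (mX ω) (MY ω) = 0 := by
  have hmX_nonneg : ∀ᵐ ω ∂P, 0 ≤ mX ω :=
    hmX.ae_le_of_ae_le (Z := fun _ => 0) measurable_const hXpos
  have hMY_nonneg : ∀ᵐ ω ∂P, 0 ≤ MY ω := by
    filter_upwards [hYpos, hMY.2.2.1] with ω h0Y hYMY using h0Y.trans hYMY
  have hY_on : ∀ᵐ ω ∂P, 0 < mX ω → Y ω ≤ 0 := by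
    filter_upwards [hmX.ae_le, hdisj] with ω hmXX hXY hpos
    rcases min_eq_iff.mp hXY with ⟨hX0, -⟩ | ⟨hY0, -⟩ <;> linarith
  have hMY_on : ∀ᵐ ω ∂P, 0 < mX ω → MY ω ≤ 0 :=
    hMY.ae_le_on_of_ae_le_on (W := fun _ => 0)
      (measurableSet_lt measurable_const hmX.measurable) measurable_const hY_on
  filter_upwards [hmX_nonneg, hMY_nonneg, hMY_on] with ω hmX0 hMY0 hMYle
  rcases hmX0.eq_or_lt with hmX0 | hmX0
  · rw [← hmX0, min_eq_left hMY0]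
  · rw [le_antisymm (hMYle hmX0) hMY0, min_eq_right hmX0.le]

/-- If `X, Y ≥ 0` are a.s. disjoint (`X ∧ Y = 0` a.s.) then `m(X|H) ∧ M(Y|H) = 0` a.s. -/
theorem condEssInf_min_condEssSup_of_disjoint {Ω : Type*} [F : MeasurableSpace Ω]
    (P : Measure Ω) [IsProbabilityMeasure P] (H : MeasurableSpace Ω) (hH : H ≤ F)
    (X Y mX MY : Ω → ℝ) (hX : EssBdd P X) (hY : EssBdd P Y)
    (hXpos : ∀ᵐ ω ∂P, 0 ≤ X ω) (hYpos : ∀ᵐ ω ∂P, 0 ≤ Y ω)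
    (hdisj : ∀ᵐ ω ∂P, min (X ω) (Y ω) = 0)
    (hmX : IsCondEssInf P H X mX) (hMY : IsCondEssSup P H Y MY) :
    ∀ᵐ ω ∂P, min (mX ω) (MY ω) = 0 :=
  condEssInf_min_condEssSup_of_disjoint_general (F := F) P H X Y mX MY hXpos hYpos hdisj hmX hMY
end

section
/- Let X be an essentially bounded random variable and φ : ℝ → ℝ a convex function. Then φ(M(X|𝓗)) ≤ M(φ(X)|𝓗) P-a.s. (Jensen's inequality for the conditional essential supremum). -/
open MeasureTheory Filter

open Set

/-!
A convex `φ` is the supremum of its tangent lines at the rationals. For one line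
`ℓ(x) = c + a (x - t)` lying below `φ`, we get `ℓ(M(X|H)) ≤ M(φ(X)|H)` a.s.: if `a ≤ 0`, then
`ℓ(M(X|H)) ≤ ℓ(X) ≤ φ(X) ≤ M(φ(X)|H)`; if `a > 0`, then `X ≤ ℓ⁻¹(M(φ(X)|H))`, an
`H`-measurable bound, so `M(X|H)` lies below it too. Countably many null sets are discarded.
-/

namespace ConvexOn

variable {S : Set ℝ} {f : ℝ → ℝ} {t x : ℝ}

lemma add_rightDeriv_mul_sub_le (hf : ConvexOn ℝ S f) (ht : t ∈ interior S) (hx : x ∈ S) :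
    f t + derivWithin f (Ioi t) t * (x - t) ≤ f x := by
  rcases lt_trichotomy x t with hxt | rfl | htx
  · have hslope : slope f x t ≤ derivWithin f (Ioi t) t :=
      (hf.slope_le_leftDeriv_of_mem_interior hx ht hxt).trans
        (hf.leftDeriv_le_rightDeriv_of_mem_interior ht)
    rw [slope_def_field, div_le_iff₀ (sub_pos.2 hxt)] at hslope
    linarith
  · simp
  · have hslope : derivWithin f (Ioi t) t ≤ slope f t x :=
      hf.rightDeriv_le_slope_of_mem_interior ht hx htx
    rw [slope_def_field, le_div_iff₀ (sub_pos.2 htx)] at hslope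
    linarith

lemma le_of_forall_rat_tangent_le (hf : ConvexOn ℝ univ f) {c : ℝ}
    (h : ∀ q : ℚ, f q + derivWithin f (Ioi (q : ℝ)) q * (x - q) ≤ c) : f x ≤ c := by
  -- Tangent slopes increase, so for `q ∈ (x, x + 1)` the tangent line at `q`, evaluated at
  -- `x < q`, is at least `f q + D * (x - q)`, which tends to `f x` as `q ↓ x`.
  set D := derivWithin f (Ioi (x + 1)) (x + 1)
  have hline : ∀ q : ℚ, (q : ℝ) ∈ Ioo x (x + 1) → f q + D * (x - q) ≤ c := by
    rintro q ⟨hxq, hqx⟩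
    have hmono : derivWithin f (Ioi (q : ℝ)) q ≤ D :=
      hf.monotoneOn_rightDeriv (by simp) (by simp) hqx.le
    nlinarith [h q]
  have hf_cont : Continuous f := hf.locallyLipschitz.continuous
  have hclosed : IsClosed {y | f y + D * (x - y) ≤ c} := isClosed_le (by fun_prop) continuous_const
  have hx : x ∈ closure (Ioo x (x + 1) ∩ range ((↑) : ℚ → ℝ)) := by
    refine closure_minimal (Rat.denseRange_cast.open_subset_closure_inter isOpen_Ioo)
      isClosed_closure ?_
    rw [closure_Ioo (by linarith)]
    exact ⟨le_rfl, by linarith⟩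
  simpa using hclosed.closure_subset_iff.2 (by rintro _ ⟨hq, q, rfl⟩; exact hline q hq) hx

end ConvexOn

namespace IsCondEssSup

variable {Ω : Type*} {F : MeasurableSpace Ω} {P : @Measure Ω F} {H : MeasurableSpace Ω}
  {X MX Y : Ω → ℝ}

lemma ae_line_le (hMX : IsCondEssSup P H X MX) (hY : Measurable[H] Y) {a c t : ℝ}
    (hXY : ∀ᵐ ω ∂P, c + a * (X ω - t) ≤ Y ω) : ∀ᵐ ω ∂P, c + a * (MX ω - t) ≤ Y ω := by
  obtain ⟨-, -, hX_le, hMX_min⟩ := hMX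
  rcases le_or_gt a 0 with ha | ha
  · filter_upwards [hX_le, hXY] with ω hXω hYω
    nlinarith
  · have hZ : Measurable[H] fun ω => t + (Y ω - c) / a :=
      measurable_const.add ((hY.sub measurable_const).div_const a)
    have hX_le_Z : ∀ᵐ ω ∂P, X ω ≤ t + (Y ω - c) / a := by
      filter_upwards [hXY] with ω hω
      rw [← sub_le_iff_le_add', le_div_iff₀ ha]
      linarith
    filter_upwards [hMX_min _ hZ hX_le_Z] with ω hω
    rw [← sub_le_iff_le_add', le_div_iff₀ ha] at hω
    linarith

end IsCondEssSup

theorem condEssSup_jensen_general {Ω : Type*} [F : MeasurableSpace Ω]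
    (P : Measure Ω) (H : MeasurableSpace Ω)
    (X MX Mphi : Ω → ℝ)
    (phi : ℝ → ℝ) (hphi : ConvexOn ℝ Set.univ phi)
    (hMX : IsCondEssSup P H X MX)
    (hMphi : IsCondEssSup P H (fun ω => phi (X ω)) Mphi) :
    ∀ᵐ ω ∂P, phi (MX ω) ≤ Mphi ω := by
  obtain ⟨hMphi_meas, -, hphiX_le, -⟩ := hMphi
  have tangent (q : ℚ) :
      ∀ᵐ ω ∂P, phi q + derivWithin phi (Ioi (q : ℝ)) q * (MX ω - q) ≤ Mphi ω := by
    refine hMX.ae_line_le hMphi_meas ?_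
    filter_upwards [hphiX_le] with ω hω
    exact (hphi.add_rightDeriv_mul_sub_le (by simp) (mem_univ _)).trans hω
  filter_upwards [ae_all_iff.2 tangent] with ω hω
  exact hphi.le_of_forall_rat_tangent_le hω

/-- Jensen's inequality for the conditional essential supremum: for convex `φ`,
`φ(M(X|H)) ≤ M(φ(X)|H)` a.s. -/
theorem condEssSup_jensen {Ω : Type*} [F : MeasurableSpace Ω]
    (P : Measure Ω) [IsProbabilityMeasure P] (H : MeasurableSpace Ω) (hH : H ≤ F)
    (X MX Mphi : Ω → ℝ) (hX : EssBdd P X)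
    (phi : ℝ → ℝ) (hphi : ConvexOn ℝ Set.univ phi)
    (hMX : IsCondEssSup P H X MX)
    (hMphi : IsCondEssSup P H (fun ω => phi (X ω)) Mphi) :
    ∀ᵐ ω ∂P, phi (MX ω) ≤ Mphi ω :=
  condEssSup_jensen_general (F := F) P H X MX Mphi phi hphi hMX hMphi
end

section
/- Let (X_n) be a sequence of random variables with X_n ↑ X P-a.s. (pointwise nondecreasing a.s. convergence), where X is essentially bounded. Then M(X_n|𝓗) ↑ M(X|𝓗) P-a.s.; in particular sup_n M(X_n|𝓗) = M(X|𝓗) P-a.s. Dually, if X_n ↓ X P-a.s. with X₀ essentially bounded, then m(X_n|𝓗) ↓ m(X|𝓗) P-a.s. -/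
open MeasureTheory Filter

lemma condEssSup_mono_aux {Ω : Type*} [F : MeasurableSpace Ω] (P : Measure Ω)
    (H : MeasurableSpace Ω)
    (X : ℕ → Ω → ℝ) (Xlim : Ω → ℝ)
    (hXmono : ∀ᵐ ω ∂P, Monotone (fun n => X n ω) ∧
      Tendsto (fun n => X n ω) atTop (nhds (Xlim ω)))
    (MX : ℕ → Ω → ℝ) (hMX : ∀ n, IsCondEssSup P H (X n) (MX n))
    (MXlim : Ω → ℝ) (hMXlim : IsCondEssSup P H Xlim MXlim) :
    ∀ᵐ ω ∂P, Monotone (fun n => MX n ω) ∧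
      Tendsto (fun n => MX n ω) atTop (nhds (MXlim ω)) ∧ (⨆ n, MX n ω) = MXlim ω := by
  have hXleXlim : ∀ n, ∀ᵐ ω ∂P, X n ω ≤ Xlim ω := fun n =>
    hXmono.mono fun ω h => h.1.ge_of_tendsto h.2 n
  have hMXle : ∀ n, ∀ᵐ ω ∂P, MX n ω ≤ MXlim ω := fun n =>
    (hMX n).2.2.2 MXlim hMXlim.1
      (by filter_upwards [hXleXlim n, hMXlim.2.2.1] with ω h1 h2 using h1.trans h2)
  have hmono : ∀ n, ∀ᵐ ω ∂P, MX n ω ≤ MX (n + 1) ω := fun n =>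
    (hMX n).2.2.2 (MX (n + 1)) (hMX (n + 1)).1
      (by filter_upwards [hXmono, (hMX (n + 1)).2.2.1] with ω h1 h2
          exact (h1.1 (Nat.le_succ n)).trans h2)
  set Y : Ω → ℝ := fun ω => ⨆ n, MX n ω with hY
  have hYmeas : Measurable[H] Y := Measurable.iSup fun n => (hMX n).1
  have hXlimleY : ∀ᵐ ω ∂P, Xlim ω ≤ Y ω := by
    filter_upwards [ae_all_iff.2 hMXle, ae_all_iff.2 fun n => (hMX n).2.2.1, hXmono]
      with ω h1 h2 h3
    have hbdd : BddAbove (Set.range fun n => MX n ω) :=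
      ⟨MXlim ω, by rintro _ ⟨n, rfl⟩; exact h1 n⟩
    exact le_of_tendsto h3.2 (Eventually.of_forall fun n => (h2 n).trans (le_ciSup hbdd n))
  have hML : ∀ᵐ ω ∂P, MXlim ω ≤ Y ω := hMXlim.2.2.2 Y hYmeas hXlimleY
  have hYM : ∀ᵐ ω ∂P, Y ω ≤ MXlim ω :=
    (ae_all_iff.2 hMXle).mono fun ω h => ciSup_le h
  filter_upwards [ae_all_iff.2 hmono, hML, hYM, ae_all_iff.2 hMXle] with ω h1 h2 h3 h4
  have hmon : Monotone fun n => MX n ω := monotone_nat_of_le_succ h1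
  have heq : (⨆ n, MX n ω) = MXlim ω := le_antisymm h3 h2
  refine ⟨hmon, ?_, heq⟩
  have ht := tendsto_atTop_ciSup hmon ⟨MXlim ω, by rintro _ ⟨n, rfl⟩; exact h4 n⟩
  rwa [heq] at ht

/-- Monotone continuity of the conditional essential supremum/infimum: if `Xₙ ↑ X` a.s. then
`M(Xₙ|H) ↑ M(X|H)` a.s. (in particular `⨆ₙ M(Xₙ|H) = M(X|H)` a.s.), and dually if `Zₙ ↓ Z`
a.s. with `Z₀` essentially bounded, then `m(Zₙ|H) ↓ m(Z|H)` a.s. -/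
theorem condEssSup_monotone_convergence {Ω : Type*} [F : MeasurableSpace Ω]
    (P : Measure Ω) [IsProbabilityMeasure P] (H : MeasurableSpace Ω) (hH : H ≤ F)
    (X : ℕ → Ω → ℝ) (Xlim : Ω → ℝ) (hXlim : EssBdd P Xlim)
    (hXmono : ∀ᵐ ω ∂P, Monotone (fun n => X n ω) ∧
      Tendsto (fun n => X n ω) atTop (nhds (Xlim ω)))
    (MX : ℕ → Ω → ℝ) (hMX : ∀ n, IsCondEssSup P H (X n) (MX n))
    (MXlim : Ω → ℝ) (hMXlim : IsCondEssSup P H Xlim MXlim)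
    (Z : ℕ → Ω → ℝ) (Zlim : Ω → ℝ) (hZ0 : EssBdd P (Z 0))
    (hZanti : ∀ᵐ ω ∂P, Antitone (fun n => Z n ω) ∧
      Tendsto (fun n => Z n ω) atTop (nhds (Zlim ω)))
    (mZ : ℕ → Ω → ℝ) (hmZ : ∀ n, IsCondEssInf P H (Z n) (mZ n))
    (mZlim : Ω → ℝ) (hmZlim : IsCondEssInf P H Zlim mZlim) :
    (∀ᵐ ω ∂P, Monotone (fun n => MX n ω) ∧
        Tendsto (fun n => MX n ω) atTop (nhds (MXlim ω))) ∧
      (∀ᵐ ω ∂P, (⨆ n, MX n ω) = MXlim ω) ∧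
      (∀ᵐ ω ∂P, Antitone (fun n => mZ n ω) ∧
        Tendsto (fun n => mZ n ω) atTop (nhds (mZlim ω))) := by
  have hsup := condEssSup_mono_aux (F := F) P H X Xlim hXmono MX hMX MXlim hMXlim
  have hdual := condEssSup_mono_aux (F := F) P H (fun n ω => -Z n ω) (fun ω => -Zlim ω)
    (hZanti.mono fun ω h => ⟨fun n m hnm => neg_le_neg (h.1 hnm), h.2.neg⟩)
    (fun n ω => -mZ n ω) hmZ (fun ω => -mZlim ω) hmZlim
  refine ⟨hsup.mono fun ω h => ⟨h.1, h.2.1⟩, hsup.mono fun ω h => h.2.2, ?_⟩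
  filter_upwards [hdual] with ω h
  refine ⟨fun n m hnm => ?_, ?_⟩
  · have := h.1 hnm
    simpa using this
  · have := h.2.1.neg
    simpa using this
end

section
/- Let X be an essentially bounded random variable and h a nonnegative 𝓗-measurable essentially bounded random variable. Then M(hX|𝓗) = h·M(X|𝓗) P-a.s. (multiplicative/averaging property of the conditional essential supremum). -/
open MeasureTheory Filter

/-- Averaging property: for nonnegative `H`-measurable essentially bounded `h`,
`M(hX|H) = h · M(X|H)` a.s. -/
theorem condEssSup_mul_measurable {Ω : Type*} [F : MeasurableSpace Ω]
    (P : Measure Ω) [IsProbabilityMeasure P] (H : MeasurableSpace Ω) (hH : H ≤ F)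
    (X h MX MhX : Ω → ℝ) (hX : EssBdd P X) (hb : EssBdd P h)
    (hm : Measurable[H] h) (hpos : ∀ᵐ ω ∂P, 0 ≤ h ω)
    (hMX : IsCondEssSup P H X MX)
    (hMhX : IsCondEssSup P H (fun ω => h ω * X ω) MhX) :
    MhX =ᵐ[P] fun ω => h ω * MX ω := by
  obtain ⟨mMX, bMX, leMX, minMX⟩ := hMX
  obtain ⟨mMhX, bMhX, leMhX, minMhX⟩ := hMhX
  -- direction 1: MhX ≤ h * MX
  have h1 : ∀ᵐ ω ∂P, MhX ω ≤ h ω * MX ω := by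
    apply minMhX (fun ω => h ω * MX ω) (hm.mul mMX)
    filter_upwards [hpos, leMX] with ω h0 hle
    exact mul_le_mul_of_nonneg_left hle h0
  -- direction 2: h * MX ≤ MhX
  set Z : Ω → ℝ := fun ω => if 0 < h ω then MhX ω / h ω else MX ω with hZdef
  have mZ : Measurable[H] Z :=
    Measurable.ite (measurableSet_lt measurable_const hm) (mMhX.div hm) mMX
  have lZ : ∀ᵐ ω ∂P, X ω ≤ Z ω := by
    filter_upwards [leMhX, leMX] with ω a b
    by_cases hc : 0 < h ω
    · simp only [hZdef, hc, if_true]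
      rw [le_div_iff₀ hc]
      linarith [a]
    · simpa [hZdef, hc] using b
  have hMXZ : ∀ᵐ ω ∂P, MX ω ≤ Z ω := minMX Z mZ lZ
  have h2 : ∀ᵐ ω ∂P, h ω * MX ω ≤ MhX ω := by
    filter_upwards [hpos, hMXZ, leMhX] with ω h0 hz a
    by_cases hc : 0 < h ω
    · simp only [hZdef, hc, if_true] at hz
      calc h ω * MX ω ≤ h ω * (MhX ω / h ω) :=
            mul_le_mul_of_nonneg_left hz (le_of_lt hc)
        _ = MhX ω := by field_simp
    · have : h ω = 0 := le_antisymm (not_lt.mp hc) h0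
      rw [this]; simpa [this] using a
  filter_upwards [h1, h2] with ω a b using le_antisymm a b
end
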